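/- For every integer α ≥ 1, every natural number k and every 2-level store ω over Γ = {Z, B, W, F}, the contour automaton A_α admits a finite sequence of steps leading from the configuration (q_0, φ(σ^k(W)), (W, F^k)·ω) to the configuration (q_0, ε, ω), where (W, F^k)·ω denotes the store whose top entry is (W, F^k) followed by the entries of ω. -/
import Mathlib


/-- Operations on a 2-level iterated pushdown store. -/
inductive Op (Γ : Type*) where
  | pop1 : Op Γ
  | pop2 : Op Γ
  | push1 : List Γ → Op Γ
  | push2 : List Γ → Op Γ

/-- A 2-level pushdown store: a finite list of entries `(A, s)` with `A` a letter of `Γ`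
and `s ∈ Γ*` the inner store of the entry. -/
abbrev Store (Γ : Type*) := List (Γ × List Γ)

/-- The top symbols of a 2-level store: the letter of the top entry followed by the first
letter of its inner store when that inner store is nonempty; an element of `Γ ∪ Γ²`. -/
def topsym {Γ : Type*} : Store Γ → List Γ
  | [] => []
  | (A, s) :: _ => A :: s.take 1

/-- Apply an operation to a 2-level store (a partial operation):
`pop1` removes the top entry; `pop2` removes the first letter of the inner store of the
top entry (when nonempty); `push1 w` replaces the top entry `(A, s)` by the entries
`(w_1, s), …, (w_m, s)`; `push2 u` replaces the top entry `(A, s)` by `(A, u ++ s)`. -/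
def applyOp {Γ : Type*} : Op Γ → Store Γ → Option (Store Γ)
  | .pop1, _ :: rest => some rest
  | .pop2, (A, _ :: s) :: rest => some ((A, s) :: rest)
  | .push1 w, (_, s) :: rest => some (w.map (fun x => (x, s)) ++ rest)
  | .push2 u, (A, s) :: rest => some ((A, u ++ s) :: rest)
  | _, _ => none

/-- A 2-iterated pushdown automaton with state set `Q`, input alphabet `In` and store
alphabet `Γ`: an initial state `q0`, an initial store symbol `Z`, and a transition table
`δ` assigning to each triple `(q, a, t)` — with `a ∈ In ∪ {ε}` and `t ∈ Γ ∪ Γ²` — a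
finite set (list) of instructions `(q', op)`. -/
structure IPDA2 (Q In Γ : Type*) where
  q0 : Q
  Z : Γ
  δ : Q → Option In → List Γ → List (Q × Op Γ)

/-- A configuration: current state, remaining input word, current 2-level store. -/
abbrev Config (Q In Γ : Type*) := Q × List In × Store Γ

/-- One computation step: an instruction from `δ(q, a, topsym ω)` may be applied, where
`a = ε` (no input consumed) or `a` is the first letter of the remaining input (which is
then consumed); the state changes to `q'` and the operation is applied to the store. -/
inductive IPDA2.Step {Q In Γ : Type*} (M : IPDA2 Q In Γ) :
    Config Q In Γ → Config Q In Γ → Prop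
  | eps {q q' : Q} {w : List In} {ω ω' : Store Γ} {op : Op Γ} :
      (q', op) ∈ M.δ q none (topsym ω) → applyOp op ω = some ω' →
      M.Step (q, w, ω) (q', w, ω')
  | read {q q' : Q} {a : In} {w : List In} {ω ω' : Store Γ} {op : Op Γ} :
      (q', op) ∈ M.δ q (some a) (topsym ω) → applyOp op ω = some ω' →
      M.Step (q, a :: w, ω) (q', w, ω')

/-- A finite sequence of computation steps. -/
def IPDA2.Steps {Q In Γ : Type*} (M : IPDA2 Q In Γ) :
    Config Q In Γ → Config Q In Γ → Prop :=
  Relation.ReflTransGen M.Step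

/-- Acceptance: some finite sequence of steps leads from the initial configuration
`(q0, w, [(Z, ε)])` to a configuration with empty remaining input and empty store. -/
def IPDA2.Accepts {Q In Γ : Type*} (M : IPDA2 Q In Γ) (w : List In) : Prop :=
  ∃ q : Q, M.Steps (M.q0, w, [(M.Z, [])]) (q, [], [])

/-- The two-letter alphabet `{B, W}` of node labels. -/
inductive BW where
  | B : BW
  | W : BW
  deriving DecidableEq

/-- The substitution `σ` determined by `σ(B) = BW` and `σ(W) = BWW`, on letters. -/
def sigmaLetter : BW → List BW
  | .B => [.B, .W]
  | .W => [.B, .W, .W]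

/-- The substitution `σ` extended to words (monoid morphism of words). -/
def sigmaWord (w : List BW) : List BW := w.flatMap sigmaLetter

/-- The two-letter input alphabet `{b, w}`. -/
inductive bw where
  | b : bw
  | w : bw
  deriving DecidableEq

/-- The letter renaming `φ : B ↦ b, W ↦ w`. -/
def phi : BW → bw
  | .B => .b
  | .W => .w

/-- The states of the contour automaton. -/
inductive Qc where
  | q0 : Qc
  | q1 : Qc
  deriving DecidableEq

/-- The store alphabet `Γ = {Z, B, W, F}` of the contour automaton. -/
inductive Γc where
  | Z : Γc
  | B : Γc
  | W : Γc
  | F : Γc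
  deriving DecidableEq

/-- The transition table of the contour automaton `A_α`. -/
def contourδ (α : ℕ) : Qc → Option bw → List Γc → List (Qc × Op Γc)
  | .q0, none, [.Z] => [(.q0, .push2 [.F]), (.q0, .push1 (List.replicate α Γc.W))]
  | .q0, none, [.Z, .F] => [(.q0, .push2 [.F]), (.q0, .push1 (List.replicate α Γc.W))]
  | .q0, none, [.W, .F] => [(.q1, .pop2)]
  | .q0, none, [.B, .F] => [(.q1, .pop2)]
  | .q0, some .b, [.B] => [(.q0, .pop1)]
  | .q0, some .w, [.W] => [(.q0, .pop1)]
  | .q1, none, [.W, .F] => [(.q0, .push1 [.B, .W, .W])]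
  | .q1, none, [.W] => [(.q0, .push1 [.B, .W, .W])]
  | .q1, none, [.B, .F] => [(.q0, .push1 [.B, .W])]
  | .q1, none, [.B] => [(.q0, .push1 [.B, .W])]
  | _, _, _ => []

/-- The contour automaton `A_α`, a 2-iterated pushdown automaton over `{b, w}`. -/
def contourM (α : ℕ) : IPDA2 Qc bw Γc := ⟨.q0, .Z, contourδ α⟩

def gam : BW → Γc
  | .B => .B
  | .W => .W

lemma sigmaIter_append (k : ℕ) (u v : List BW) :
    sigmaWord^[k] (u ++ v) = sigmaWord^[k] u ++ sigmaWord^[k] v := by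
  induction k generalizing u v with
  | zero => simp
  | succ k ih =>
    rw [Function.iterate_succ_apply, Function.iterate_succ_apply, Function.iterate_succ_apply]
    rw [show sigmaWord (u ++ v) = sigmaWord u ++ sigmaWord v by simp [sigmaWord], ih]

lemma step_append {Q In Γ : Type*} (M : IPDA2 Q In Γ) (v : List In) {c c' : Config Q In Γ}
    (h : M.Step c c') : M.Step (c.1, c.2.1 ++ v, c.2.2) (c'.1, c'.2.1 ++ v, c'.2.2) := by
  cases h with
  | eps h1 h2 => exact .eps h1 h2
  | read h1 h2 => exact .read h1 h2

lemma steps_append {Q In Γ : Type*} (M : IPDA2 Q In Γ) (v : List In) {c c' : Config Q In Γ}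
    (h : M.Steps c c') : M.Steps (c.1, c.2.1 ++ v, c.2.2) (c'.1, c'.2.1 ++ v, c'.2.2) := by
  induction h with
  | refl => exact .refl
  | tail _ h ih => exact ih.tail (step_append M v h)

lemma contour_key (α k : ℕ) : ∀ (X : BW) (ω : Store Γc),
    (contourM α).Steps (Qc.q0, (sigmaWord^[k] [X]).map phi,
      (gam X, List.replicate k Γc.F) :: ω) (Qc.q0, [], ω) := by
  induction k with
  | zero =>
    intro X ω
    cases X <;>
      exact Relation.ReflTransGen.single
        (IPDA2.Step.read (op := .pop1)
          (by simp [contourM, contourδ, topsym, gam, phi]) (by simp [applyOp]))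
  | succ k ih =>
    intro X ω
    have hrep : List.replicate (k + 1) Γc.F = Γc.F :: List.replicate k Γc.F := rfl
    cases X with
    | W =>
      have hin : (sigmaWord^[k+1] [BW.W]).map phi
          = (sigmaWord^[k] [BW.B]).map phi
            ++ ((sigmaWord^[k] [BW.W]).map phi ++ (sigmaWord^[k] [BW.W]).map phi) := by
        rw [Function.iterate_succ_apply,
          show sigmaWord [BW.W] = [BW.B] ++ ([BW.W] ++ [BW.W]) by rfl,
          sigmaIter_append, sigmaIter_append]
        simp
      rw [hin, hrep]
      set u := (sigmaWord^[k] [BW.B]).map phi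
      set w := (sigmaWord^[k] [BW.W]).map phi
      set s := List.replicate k Γc.F
      have s1 : (contourM α).Step (Qc.q0, u ++ (w ++ w), (Γc.W, Γc.F :: s) :: ω)
          (Qc.q1, u ++ (w ++ w), (Γc.W, s) :: ω) :=
        .eps (op := .pop2) (by simp [contourM, contourδ, topsym]) (by simp [applyOp])
      have s2 : (contourM α).Step (Qc.q1, u ++ (w ++ w), (Γc.W, s) :: ω)
          (Qc.q0, u ++ (w ++ w), (Γc.B, s) :: (Γc.W, s) :: (Γc.W, s) :: ω) := by
        refine .eps (op := .push1 [.B, .W, .W]) ?_ (by simp [applyOp])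
        cases k <;> simp [contourM, contourδ, topsym, s, List.replicate]
      have t1 := steps_append (contourM α) (w ++ w) (ih BW.B ((Γc.W, s) :: (Γc.W, s) :: ω))
      have t2 := steps_append (contourM α) w (ih BW.W ((Γc.W, s) :: ω))
      have t3 := ih BW.W ω
      simp only [gam, List.nil_append] at t1 t2
      exact Relation.ReflTransGen.head s1 (Relation.ReflTransGen.head s2
        (t1.trans (t2.trans t3)))
    | B =>
      have hin : (sigmaWord^[k+1] [BW.B]).map phi
          = (sigmaWord^[k] [BW.B]).map phi ++ (sigmaWord^[k] [BW.W]).map phi := by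
        rw [Function.iterate_succ_apply,
          show sigmaWord [BW.B] = [BW.B] ++ [BW.W] by rfl, sigmaIter_append]
        simp
      rw [hin, hrep]
      set u := (sigmaWord^[k] [BW.B]).map phi
      set w := (sigmaWord^[k] [BW.W]).map phi
      set s := List.replicate k Γc.F
      have s1 : (contourM α).Step (Qc.q0, u ++ w, (Γc.B, Γc.F :: s) :: ω)
          (Qc.q1, u ++ w, (Γc.B, s) :: ω) :=
        .eps (op := .pop2) (by simp [contourM, contourδ, topsym]) (by simp [applyOp])
      have s2 : (contourM α).Step (Qc.q1, u ++ w, (Γc.B, s) :: ω)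
          (Qc.q0, u ++ w, (Γc.B, s) :: (Γc.W, s) :: ω) := by
        refine .eps (op := .push1 [.B, .W]) ?_ (by simp [applyOp])
        cases k <;> simp [contourM, contourδ, topsym, s, List.replicate]
      have t1 := steps_append (contourM α) w (ih BW.B ((Γc.W, s) :: ω))
      have t2 := ih BW.W ω
      simp only [gam, List.nil_append] at t1
      exact Relation.ReflTransGen.head s1 (Relation.ReflTransGen.head s2
        (t1.trans t2))

/-- For every integer `α ≥ 1`, every `k : ℕ` and every 2-level store `ω` over
`Γ = {Z, B, W, F}`, the contour automaton `A_α` admits a finite sequence of steps from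
the configuration `(q₀, φ(σ^k(W)), (W, F^k)·ω)` to the configuration `(q₀, ε, ω)`. -/
theorem contourM_steps_W (α : ℕ) (hα : 1 ≤ α) (k : ℕ) (ω : Store Γc) :
    (contourM α).Steps (Qc.q0, (sigmaWord^[k] [BW.W]).map phi,
        (Γc.W, List.replicate k Γc.F) :: ω)
      (Qc.q0, [], ω) :=
  contour_key α k BW.W ω
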